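/- arXiv:1203.4465 — 3 statements merged into one kernel-verified Lean document; each statement's English description precedes it below -/
import Mathlib

section
/- Suppose a family of linear operators D_J on a module, indexed by compositions J of positive integers, satisfies D_I ∘ D_J = D_{I⊞J} + D_{I⊡J} for all compositions I, J, where I ⊞ J merges the last part of I with the first part of J and I ⊡ J is concatenation. Then for any composition I = [i_1,...,i_r], the composition of the single-part operators satisfies D_{[i_1]} ∘ D_{[i_2]} ∘ ⋯ ∘ D_{[i_r]} = Σ_{J ⪯ I} D_J, where the sum is over all compositions J coarser than I (obtained from I by merging consecutive parts). -/
/-!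
Induct on the length of `I = i :: I'`. Applying the relation with the single-part composition
`[i]` to each coarsening `J` of `I'` produces `[i] ⊡ J`, where `i` stays a part of its own, and
`[i] ⊞ J`, where `i` is merged into the first part of `J`. These are exactly the coarsenings of
`I`, each occurring once because all parts are positive.
-/

/-- `I ⊡ J`: concatenation. -/
def boxdot (I J : List ℕ) : List ℕ := I ++ J

/-- `I ⊞ J`: merge the last part of `I` with the first part of `J`. -/
def boxplus (I J : List ℕ) : List ℕ :=
  match J with
  | [] => I
  | j :: js => I.dropLast ++ (I.getLastD 0 + j) :: js

/-- `coarsen J I`: `J ⪯ I`, i.e. `J` is obtained from `I` by summing consecutive runs. -/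
def coarsen (J I : List ℕ) : Prop :=
  ∃ P : List (List ℕ), (∀ p ∈ P, p ≠ []) ∧ P.flatten = I ∧ P.map List.sum = J

lemma boxplus_singleton_cons (i j : ℕ) (J : List ℕ) : boxplus [i] (j :: J) = (i + j) :: J := by
  simp [boxplus]

namespace coarsen

lemma ne_nil {J I : List ℕ} (h : coarsen J I) (hI : I ≠ []) : J ≠ [] := by
  obtain ⟨P, -, rfl, rfl⟩ := h
  rintro hP
  exact hI (by simp [List.map_eq_nil_iff.mp hP])

lemma pos {J I : List ℕ} (h : coarsen J I) (hpos : ∀ i ∈ I, 0 < i) : ∀ j ∈ J, 0 < j := by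
  obtain ⟨P, hne, rfl, rfl⟩ := h
  simp only [List.mem_map, List.mem_flatten] at hpos ⊢
  rintro _ ⟨p, hp, rfl⟩
  exact List.sum_pos p (fun x hx => hpos x ⟨p, hp, hx⟩) (hne p hp)

end coarsen

lemma coarsen_singleton_iff {J : List ℕ} {i : ℕ} : coarsen J [i] ↔ J = [i] := by
  constructor
  · rintro ⟨P, hne, hflat, rfl⟩
    obtain ⟨as, bs, rfl, has, hbs⟩ := List.flatten_eq_singleton_iff.mp hflat
    have no_empty_parts :
        ∀ L : List (List ℕ), (∀ l ∈ L, l = []) → (∀ l ∈ L, l ≠ []) → L = [] :=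
      fun L h h' => List.eq_nil_iff_forall_not_mem.mpr fun l hl => h' l hl (h l hl)
    rw [no_empty_parts as has fun l hl => hne l (by simp [hl]),
      no_empty_parts bs hbs fun l hl => hne l (by simp [hl])]
    simp
  · rintro rfl
    exact ⟨[[i]], by simp, by simp, by simp⟩

lemma coarsen_cons_cons_iff {J : List ℕ} {i j : ℕ} {t : List ℕ} :
    coarsen J (i :: j :: t) ↔
      ∃ K, coarsen K (j :: t) ∧ (J = i :: K ∨ J = boxplus [i] K) := by
  constructor
  · rintro ⟨_ | ⟨_ | ⟨x, p⟩, P⟩, hne, hflat, rfl⟩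
    · simp at hflat
    · exact absurd rfl (hne [] (by simp))
    obtain ⟨rfl, htail⟩ : x = i ∧ p ++ P.flatten = j :: t := by simpa using hflat
    have hneP : ∀ q ∈ P, q ≠ [] := fun q hq => hne q (by simp [hq])
    rcases p with _ | ⟨y, p⟩
    · exact ⟨P.map List.sum, ⟨P, hneP, htail, rfl⟩, Or.inl (by simp)⟩
    · refine ⟨((y :: p) :: P).map List.sum, ⟨(y :: p) :: P, ?_, htail, rfl⟩, Or.inr ?_⟩
      · simpa using hneP
      · simp [boxplus_singleton_cons]
  · rintro ⟨K, ⟨Q, hne, hflat, rfl⟩, rfl | rfl⟩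
    · exact ⟨[i] :: Q, by simpa using hne, by simp [hflat], by simp⟩
    · rcases Q with _ | ⟨q, Q⟩
      · simp at hflat
      refine ⟨(i :: q) :: Q, ?_, by simpa using hflat, by simp [boxplus_singleton_cons]⟩
      simpa using (List.forall_mem_cons.mp hne).2

def coarsenings : List ℕ → List (List ℕ)
  | [] => [[]]
  | [i] => [[i]]
  | i :: j :: t => (coarsenings (j :: t)).map (i :: ·) ++ (coarsenings (j :: t)).map (boxplus [i])

lemma mem_coarsenings_iff {I : List ℕ} (hI : I ≠ []) {J : List ℕ} :
    J ∈ coarsenings I ↔ coarsen J I := by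
  induction I generalizing J with
  | nil => exact absurd rfl hI
  | cons i I ih =>
    rcases I with _ | ⟨j, t⟩
    · simp [coarsenings, coarsen_singleton_iff]
    · simp only [coarsenings, coarsen_cons_cons_iff, List.mem_append, List.mem_map,
        ih (List.cons_ne_nil j t)]
      grind

lemma nodup_coarsenings {I : List ℕ} (hpos : ∀ i ∈ I, 0 < i) : (coarsenings I).Nodup := by
  induction I with
  | nil => simp [coarsenings]
  | cons i I ih =>
    rcases I with _ | ⟨j, t⟩
    · simp [coarsenings]
    have htail := ih fun x hx => hpos x (List.mem_cons_of_mem i hx)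
    have hcoarse : ∀ K ∈ coarsenings (j :: t), ∃ k K', K = k :: K' ∧ 0 < k := by
      intro K hK
      have hK := (mem_coarsenings_iff (List.cons_ne_nil j t)).mp hK
      obtain ⟨k, K', rfl⟩ := List.exists_cons_of_ne_nil (hK.ne_nil (List.cons_ne_nil j t))
      exact ⟨k, K', rfl, hK.pos (fun x hx => hpos x (List.mem_cons_of_mem i hx)) k (by simp)⟩
    refine htail.map List.cons_injective |>.append (htail.map_on ?_) ?_
    · intro K hK L hL hKL
      obtain ⟨k, K', rfl, -⟩ := hcoarse K hK
      obtain ⟨l, L', rfl, -⟩ := hcoarse L hL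
      simp_all [boxplus_singleton_cons]
    · -- the head of a merged coarsening exceeds `i`
      intro _ hK hL
      obtain ⟨K, -, rfl⟩ := List.mem_map.mp hK
      obtain ⟨L, hL, hLK⟩ := List.mem_map.mp hL
      obtain ⟨l, L', rfl, hl⟩ := hcoarse L hL
      simp only [boxplus_singleton_cons, List.cons.injEq] at hLK
      omega

lemma prod_map_singleton_eq_sum_coarsenings {A : Type*} [Semiring A] (D : List ℕ → A)
    (hD : ∀ (i : ℕ) (J : List ℕ), 0 < i → J ≠ [] → (∀ j ∈ J, 0 < j) →
      D [i] * D J = D (boxplus [i] J) + D (boxdot [i] J))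
    {I : List ℕ} (hI : I ≠ []) (hpos : ∀ i ∈ I, 0 < i) :
    (I.map fun i => D [i]).prod = ((coarsenings I).map D).sum := by
  induction I with
  | nil => exact absurd rfl hI
  | cons i I ih =>
    rcases I with _ | ⟨j, t⟩
    · simp [coarsenings]
    have htail : ∀ x ∈ j :: t, 0 < x := fun x hx => hpos x (List.mem_cons_of_mem i hx)
    calc ((i :: j :: t).map fun n => D [n]).prod
        = D [i] * ((coarsenings (j :: t)).map D).sum := by
          rw [List.map_cons, List.prod_cons, ih (List.cons_ne_nil j t) htail]
      _ = ((coarsenings (j :: t)).map fun K => D (boxplus [i] K) + D (boxdot [i] K)).sum := by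
          rw [← List.sum_map_mul_left]
          refine congrArg List.sum (List.map_congr_left fun K hK => ?_)
          have hK := (mem_coarsenings_iff (List.cons_ne_nil j t)).mp hK
          exact hD i K (hpos i (by simp)) (hK.ne_nil (List.cons_ne_nil j t)) (hK.pos htail)
      _ = ((coarsenings (i :: j :: t)).map D).sum := by
          simp [coarsenings, List.sum_map_add, boxdot, add_comm, Function.comp_def]

theorem stmt2 {R M : Type*} [CommRing R] [AddCommGroup M] [Module R M]
    (D : List ℕ → Module.End R M)
    (hD : ∀ I J : List ℕ, I ≠ [] → J ≠ [] → (∀ i ∈ I, 0 < i) → (∀ j ∈ J, 0 < j) →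
      D I * D J = D (boxplus I J) + D (boxdot I J))
    (I : List ℕ) (hI : I ≠ []) (hpos : ∀ i ∈ I, 0 < i) :
    (I.map fun i => D [i]).prod = ∑ᶠ J ∈ {J : List ℕ | coarsen J I}, D J := by
  have hset : {J : List ℕ | coarsen J I} = ↑(coarsenings I).toFinset := by
    ext J
    simp [mem_coarsenings_iff hI]
  rw [hset, finsum_mem_coe_finset, List.sum_toFinset D (nodup_coarsenings hpos)]
  exact prod_map_singleton_eq_sum_coarsenings D
    (fun i J hi hJ hJpos => hD [i] J (List.cons_ne_nil i []) hJ (by simpa using hi) hJpos) hI hpos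
end

section
/- Let A be an algebra with a subalgebra B spanned by products h_{j_1}⋯h_{j_l} of commuting generators h_j = U_j(1), where U_j is left multiplication by h_j. Suppose the D_i are linear operators on A satisfying the bracket relation D_i∘U_j = U_j∘D_i + D_{i−1}∘U_{j−1}, D_0 = id, D_1(B) ⊆ B, and D_i(h_r) = h_{r−i}. Then D_i(B) ⊆ B for all i ≥ 0. -/
/-!
Induct on `i`. Expanding `D_{i+1} (h_{m+1} x) = h_{m+1} D_{i+1} x + D_i (h_m x)` peels the
first factor off a product of generators: the first term lies in `B` by induction on the
length of the product, the second because `h_m x` is again such a product and `D_i(B) ⊆ B`.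
The empty product is `1 = h_0`, which `D_{i+1}` kills.
-/

open Submodule

section ListProds

variable {R A : Type*} [CommRing R] [Ring A] [Algebra R A]

def listProds (h : ℕ → A) (k : ℕ) : Set A :=
  {x | ∃ L : List ℕ, (∀ j ∈ L, j ≤ k) ∧ x = (L.map h).prod}

variable {h : ℕ → A} {k : ℕ}

theorem mul_listProd_mem_listProds {j : ℕ} (hj : j ≤ k) {L : List ℕ} (hL : ∀ i ∈ L, i ≤ k) :
    h j * (L.map h).prod ∈ listProds h k :=
  ⟨j :: L, by simpa using ⟨hj, hL⟩, by simp⟩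

theorem mul_mem_span_listProds {j : ℕ} (hj : j ≤ k) {b : A}
    (hb : b ∈ span R (listProds h k)) : h j * b ∈ span R (listProds h k) := by
  suffices span R (listProds h k) ≤ (span R (listProds h k)).comap (LinearMap.mulLeft R (h j))
    from this hb
  rw [span_le]
  rintro _ ⟨L, hL, rfl⟩
  exact subset_span (mul_listProd_mem_listProds hj hL)

theorem mem_span_listProds_of_bracket (hzero : h 0 = 1) (E F : Module.End R A)
    (hbracket : ∀ m x, E (h (m + 1) * x) = h (m + 1) * E x + F (h m * x))
    (hE : E (h 0) = 0) (hF : ∀ b ∈ span R (listProds h k), F b ∈ span R (listProds h k)) :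
    ∀ b ∈ span R (listProds h k), E b ∈ span R (listProds h k) := by
  suffices span R (listProds h k) ≤ (span R (listProds h k)).comap E from fun b hb => this hb
  rw [span_le]
  rintro _ ⟨L, hL, rfl⟩
  induction L with
  | nil => simp [← hzero, hE]
  | cons j L ih =>
    have hL' : ∀ i ∈ L, i ≤ k := fun i hi => hL i (List.mem_cons_of_mem _ hi)
    have hj : j ≤ k := hL j List.mem_cons_self
    rw [List.map_cons, List.prod_cons]
    cases j with
    | zero => simpa [hzero] using ih hL'
    | succ m =>
      rw [SetLike.mem_coe, mem_comap, hbracket]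
      exact add_mem (mul_mem_span_listProds hj (ih hL'))
        (hF _ (subset_span (mul_listProd_mem_listProds (by omega) hL')))

end ListProds

theorem stmt5_general {R A : Type*} [CommRing R] [Ring A] [Algebra R A] (k : ℕ)
    (h : ℕ → A) (hzero : h 0 = 1)
    (U D : ℕ → Module.End R A)
    (hU : ∀ j x, U j x = h j * x)
    (hD0 : D 0 = 1)
    (hbracket : ∀ i j, 1 ≤ i → 1 ≤ j →
      D i * U j = U j * D i + D (i - 1) * U (j - 1))
    (B : Submodule R A)
    (hB : B = Submodule.span R
      {x | ∃ L : List ℕ, (∀ j ∈ L, j ≤ k) ∧ x = (L.map h).prod})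
    (hDh : ∀ i r, r ≤ k →
      (i ≤ r → D i (h r) = h (r - i)) ∧ (r < i → D i (h r) = 0)) :
    ∀ i, ∀ b ∈ B, D i b ∈ B := by
  change B = span R (listProds h k) at hB
  subst hB
  intro i
  induction i with
  | zero => simp [hD0]
  | succ n ih =>
    refine mem_span_listProds_of_bracket hzero _ _ (fun m x => ?_)
      ((hDh (n + 1) 0 k.zero_le).2 n.succ_pos) ih
    simpa [hU] using LinearMap.congr_fun (hbracket (n + 1) (m + 1) (by omega) (by omega)) x

theorem stmt5 {R A : Type*} [CommRing R] [Ring A] [Algebra R A] (k : ℕ)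
    (h : ℕ → A) (hzero : h 0 = 1)
    (hcommute : ∀ i j, h i * h j = h j * h i)
    (U D : ℕ → Module.End R A)
    (hU : ∀ j x, U j x = h j * x)
    (hD0 : D 0 = 1)
    (hbracket : ∀ i j, 1 ≤ i → 1 ≤ j →
      D i * U j = U j * D i + D (i - 1) * U (j - 1))
    (B : Submodule R A)
    (hB : B = Submodule.span R
      {x | ∃ L : List ℕ, (∀ j ∈ L, j ≤ k) ∧ x = (L.map h).prod})
    (hD1 : ∀ b ∈ B, D 1 b ∈ B)
    (hDh : ∀ i r, r ≤ k →
      (i ≤ r → D i (h r) = h (r - i)) ∧ (r < i → D i (h r) = 0)) :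
    ∀ i, ∀ b ∈ B, D i b ∈ B :=
  stmt5_general k h hzero U D hU hD0 hbracket B hB hDh
end

section
/- In the affine symmetric group W realized as permutations w: ℤ → ℤ with w(i + k + 1) = w(i) + k + 1 and Σ_{i=1}^{k+1} w(i) = Σ_{i=1}^{k+1} i, for each D ⊊ {0,1,...,k} there exists a unique cyclically decreasing element w_D whose support (set of simple reflections appearing in a reduced word) is exactly {s_d : d ∈ D}, and ℓ(w_D) = |D|. -/
/-!
Realise `W` by affine permutations of `ℤ`: `s_a` swaps `x` and `x + 1` whenever
`x ≡ a (mod k + 1)`. Cut `ℤ` into blocks of length `k + 1` just after the residue class of `a`;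
every `s_b` with `b ≠ a` preserves each block, while `s_a` does not. Hence if a letter occurs
exactly once in some word, it occurs in every word for the same element, so words without
repeated letters are reduced, which gives `ℓ(w_D) = |D|`.
Two cyclically decreasing words with the same letters differ only in the relative order of
non-adjacent (hence commuting) letters, so they have the same product; and since some `c ∉ D`,
listing `D` in the order `c - 1, c - 2, …` gives such a word.
-/

/-- The Coxeter matrix of affine type `A_k^{(1)}` (for `k ≥ 2`). -/
def affCM (k : ℕ) (hk : 2 ≤ k) : CoxeterMatrix (Fin (k + 1)) where
  M := Matrix.of fun i j => if i = j then 1 else if i = j + 1 ∨ j = i + 1 then 3 else 2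
  isSymm := by
    ext i j
    simp only [Matrix.transpose_apply, Matrix.of_apply]
    by_cases h : i = j
    · subst h; simp
    · rw [if_neg h, if_neg (Ne.symm h)]
      by_cases h2 : j = i + 1 ∨ i = j + 1
      · rw [if_pos h2, if_pos h2.symm]
      · rw [if_neg h2, if_neg fun hc => h2 hc.symm]
  diagonal i := by simp
  off_diagonal i j hij := by
    simp only [Matrix.of_apply, if_neg hij]
    split <;> omega

/-- `w` is cyclically decreasing with support exactly `D`: it has a reduced word `l` in
which each letter occurs at most once, whenever `m` and `m+1` both occur `m+1` precedes
`m`, and whose set of letters is `D`. -/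
def IsCyclicallyDecreasingOn (k : ℕ) (hk : 2 ≤ k)
    (cs : CoxeterSystem (affCM k hk) ((affCM k hk).Group))
    (D : Finset (Fin (k + 1))) (w : (affCM k hk).Group) : Prop :=
  ∃ l : List (Fin (k + 1)),
    cs.wordProd l = w ∧ cs.IsReduced l ∧ l.Nodup ∧
    (∀ m : Fin (k + 1), m ∈ l → m + 1 ∈ l → l.idxOf (m + 1) < l.idxOf m) ∧
    (∀ i : Fin (k + 1), i ∈ l ↔ i ∈ D)

theorem List.Perm.prod_map_eq_of_pairwise_not {α M : Type*} [Monoid M] {f : α → M}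
    {r : α → α → Prop} (hf : ∀ a b, ¬ r a b → ¬ r b a → Commute (f a) (f b))
    {l l' : List α} (hp : l.Perm l') (hl : l.Pairwise fun a b => ¬ r b a)
    (hl' : l'.Pairwise fun a b => ¬ r b a) : (l.map f).prod = (l'.map f).prod := by
  induction l' generalizing l with
  | nil => rw [hp.eq_nil]
  | cons x t ih =>
    obtain ⟨l₁, l₂, rfl⟩ := List.append_of_mem (hp.symm.subset List.mem_cons_self)
    have hcomm : Commute (f x) (l₁.map f).prod := by
      refine Commute.list_prod_right _ _ ?_
      simp only [List.mem_map]
      rintro _ ⟨b, hb, rfl⟩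
      rcases List.mem_cons.1 (hp.subset (List.mem_append_left _ hb)) with rfl | hbt
      · exact Commute.refl _
      · exact hf x b ((List.pairwise_append.1 hl).2.2 b hb x List.mem_cons_self)
          ((List.pairwise_cons.1 hl').1 b hbt)
    have hsub : (l₁ ++ l₂).Sublist (l₁ ++ x :: l₂) :=
      (List.sublist_cons_self x l₂).append_left l₁
    rw [List.map_cons, List.prod_cons, ← ih (List.perm_middle.symm.trans hp).cons_inv
      (hl.sublist hsub) (List.pairwise_cons.1 hl').2]
    simp only [List.map_append, List.map_cons, List.prod_append, List.prod_cons, ← mul_assoc,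
      hcomm.eq]

theorem List.Nodup.pairwise_ne_iff_idxOf_lt {α : Type*} [DecidableEq α] {l : List α}
    (hl : l.Nodup) {g : α → α} (hg : ∀ a, g a ≠ a) :
    l.Pairwise (fun a b => b ≠ g a) ↔ ∀ a ∈ l, g a ∈ l → l.idxOf (g a) < l.idxOf a := by
  constructor
  · intro h a ha hga
    have hia := List.idxOf_lt_length_of_mem ha
    have higa := List.idxOf_lt_length_of_mem hga
    rcases lt_trichotomy (l.idxOf (g a)) (l.idxOf a) with hlt | heq | hgt
    · exact hlt
    · exact absurd ((List.idxOf_inj hga).1 heq) (hg a)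
    · have := List.pairwise_iff_getElem.1 h _ _ hia higa hgt
      rw [List.getElem_idxOf hia, List.getElem_idxOf higa] at this
      exact (this rfl).elim
  · intro h
    refine List.pairwise_iff_getElem.2 fun i j hi hj hij hsucc => ?_
    have := h l[i] (List.getElem_mem hi) (hsucc ▸ List.getElem_mem hj)
    rw [← hsucc, hl.idxOf_getElem, hl.idxOf_getElem] at this
    omega

theorem Fin.add_one_ne_self {k : ℕ} (hk : 1 ≤ k) (m : Fin (k + 1)) : m + 1 ≠ m := fun h => by
  have := congrArg Fin.val h
  rw [Fin.val_add_one] at this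
  split_ifs at this with hm
  · rw [hm, Fin.val_last] at this
    omega
  · omega

open Fin.CommRing in
theorem Fin.exists_nodup_pairwise_ne_add_one {k : ℕ} (D : Finset (Fin (k + 1)))
    {c : Fin (k + 1)} (hc : c ∉ D) :
    ∃ l : List (Fin (k + 1)),
      l.Nodup ∧ l.Pairwise (fun a b => b ≠ a + 1) ∧ ∀ i, i ∈ l ↔ i ∈ D := by
  -- the letters c - 1, c - 2, ..., c - (k + 1) = c, kept if they lie in D
  let f : Fin (k + 1) → Fin (k + 1) := fun j => c - 1 - j
  refine ⟨(List.ofFn f).filter (· ∈ D), (List.nodup_ofFn.2 sub_right_injective).filter _,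
    ?_, ?_⟩
  · rw [List.pairwise_filter, List.pairwise_ofFn]
    intro i j hij _ hjD hsucc
    have hij' : i = j + 1 := by linear_combination hsucc
    have hj : j = Fin.last k := by
      by_contra hj
      have := Fin.val_add_one_of_lt (lt_of_le_of_ne (Fin.le_last j) hj)
      rw [← hij'] at this
      omega
    have hfj : f j = c := by
      simp only [f, hj]
      linear_combination -(Fin.last_add_one k)
    exact hc (hfj ▸ of_decide_eq_true hjD)
  · intro i
    simp only [List.mem_filter, List.mem_ofFn, decide_eq_true_eq, and_iff_right_iff_imp]
    exact fun _ => ⟨c - 1 - i, sub_sub_cancel _ _⟩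

theorem CoxeterSystem.commute_simple_of_eq_two {B W : Type*} [Group W] {M : CoxeterMatrix B}
    (cs : CoxeterSystem M W) {i j : B} (h : M i j = 2) : Commute (cs.simple i) (cs.simple j) := by
  have hsq := cs.simple_mul_simple_pow i j
  rw [h, pow_two] at hsq
  calc cs.simple i * cs.simple j = (cs.simple i * cs.simple j)⁻¹ := eq_inv_of_mul_eq_one_left hsq
    _ = cs.simple j * cs.simple i := by rw [mul_inv_rev, cs.inv_simple, cs.inv_simple]

theorem mul_pow_three_eq_one_of_braid {G : Type*} [Group G] {x y : G} (hx : x⁻¹ = x)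
    (hy : y⁻¹ = y) (h : x * y * x = y * x * y) : (x * y) ^ 3 = 1 := by
  have hxyx : (x * y * x)⁻¹ = x * y * x := by simp only [mul_inv_rev, hx, hy, mul_assoc]
  calc (x * y) ^ 3 = x * y * x * (y * x * y) := by
        simp only [pow_succ, pow_zero, one_mul, mul_assoc]
    _ = x * y * x * (x * y * x)⁻¹ := by rw [← h, hxyx]
    _ = 1 := mul_inv_cancel _

theorem Int.add_one_ediv_of_not_dvd {m d : ℤ} (hm : 0 < m) (h : ¬ m ∣ d + 1) :
    (d + 1) / m = d / m := by
  have hr := Int.emod_nonneg d hm.ne'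
  have hr' := Int.emod_lt_of_pos d hm
  have hd := Int.mul_ediv_add_emod d m
  have hr1 : d % m + 1 ≠ m := fun he => h ⟨d / m + 1, by linear_combination he - hd⟩
  rw [Int.ediv_eq_iff_of_pos hm, mul_comm]
  omega

namespace AffineSwap

variable {n : ℕ}

/-- The generator `s_a` of the affine symmetric group, as a map `ℤ → ℤ`. -/
def affineSwap (a : ZMod n) (x : ℤ) : ℤ :=
  if (x : ZMod n) = a then x + 1 else if (x : ZMod n) = a + 1 then x - 1 else x

theorem affineSwap_of_eq {a : ZMod n} {x : ℤ} (h : (x : ZMod n) = a) : affineSwap a x = x + 1 :=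
  if_pos h

theorem affineSwap_of_ne {a : ZMod n} {x : ℤ} (h : (x : ZMod n) ≠ a)
    (h' : (x : ZMod n) ≠ a + 1) : affineSwap a x = x := by
  rw [affineSwap, if_neg h, if_neg h']

variable [Fact (1 < n)]

theorem affineSwap_of_eq_add_one {a : ZMod n} {x : ℤ} (h : (x : ZMod n) = a + 1) :
    affineSwap a x = x - 1 := by
  rw [affineSwap, if_neg (by simp [h]), if_pos h]

theorem affineSwap_involutive (a : ZMod n) : Function.Involutive (affineSwap a) := by
  intro x
  by_cases ha : (x : ZMod n) = a
  · simp [affineSwap_of_eq, affineSwap_of_eq_add_one, ha]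
  by_cases ha1 : (x : ZMod n) = a + 1
  · simp [affineSwap_of_eq, affineSwap_of_eq_add_one, ha1]
  simp [affineSwap_of_ne, ha, ha1]

theorem affineSwap_comm {a b : ZMod n} (hab : a ≠ b) (hab' : a ≠ b + 1) (hba : b ≠ a + 1)
    (x : ℤ) : affineSwap a (affineSwap b x) = affineSwap b (affineSwap a x) := by
  have := hab.symm; have := hab'.symm; have := hba.symm
  by_cases ha : (x : ZMod n) = a
  · simp [affineSwap_of_eq, affineSwap_of_ne, *]
  by_cases ha1 : (x : ZMod n) = a + 1
  · simp [affineSwap_of_eq_add_one, affineSwap_of_ne, *]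
  by_cases hb : (x : ZMod n) = b
  · simp [affineSwap_of_eq, affineSwap_of_ne, *]
  by_cases hb1 : (x : ZMod n) = b + 1
  · simp [affineSwap_of_eq_add_one, affineSwap_of_ne, *]
  simp [affineSwap_of_ne, *]

theorem affineSwap_braid (h2 : (2 : ZMod n) ≠ 0) (a : ZMod n) (x : ℤ) :
    affineSwap a (affineSwap (a + 1) (affineSwap a x)) =
      affineSwap (a + 1) (affineSwap a (affineSwap (a + 1) x)) := by
  have h21 : (2 : ZMod n) ≠ 1 := fun h => one_ne_zero (by linear_combination h : (1 : ZMod n) = 0)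
  by_cases ha : (x : ZMod n) = a
  · simp [affineSwap_of_eq, affineSwap_of_ne, ha, h2, h21, add_assoc, one_add_one_eq_two]
  by_cases ha1 : (x : ZMod n) = a + 1
  · simp [affineSwap_of_eq, affineSwap_of_eq_add_one, affineSwap_of_ne, ha1, h2, h21, add_assoc,
      one_add_one_eq_two]
  by_cases ha2 : (x : ZMod n) = a + 2
  · have h3 : (2 : ZMod n) - 1 = 1 := by ring
    simp [affineSwap_of_eq_add_one, affineSwap_of_ne, ha2, h2, h21, add_assoc, one_add_one_eq_two,
      add_sub_assoc, h3]
  simp [affineSwap_of_ne, ha, ha1, ha2, add_assoc, one_add_one_eq_two]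

def affineSwapPerm (a : ZMod n) : Equiv.Perm ℤ := (affineSwap_involutive a).toPerm _

theorem affineSwapPerm_apply (a : ZMod n) (x : ℤ) : affineSwapPerm a x = affineSwap a x := rfl

theorem affineSwapPerm_inv (a : ZMod n) : (affineSwapPerm a)⁻¹ = affineSwapPerm a := rfl

theorem affineSwapPerm_mul_self (a : ZMod n) : affineSwapPerm a * affineSwapPerm a = 1 :=
  Equiv.ext (affineSwap_involutive a)

theorem affineSwapPerm_commute {a b : ZMod n} (hab : a ≠ b) (hab' : a ≠ b + 1)
    (hba : b ≠ a + 1) : Commute (affineSwapPerm a) (affineSwapPerm b) :=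
  Equiv.ext (affineSwap_comm hab hab' hba)

theorem affineSwapPerm_braid (h2 : (2 : ZMod n) ≠ 0) (a : ZMod n) :
    affineSwapPerm a * affineSwapPerm (a + 1) * affineSwapPerm a =
      affineSwapPerm (a + 1) * affineSwapPerm a * affineSwapPerm (a + 1) :=
  Equiv.ext (affineSwap_braid h2 a)

/-- The permutations preserving each block `[c + m * n, c + (m + 1) * n)`. -/
def blockStabilizer (n : ℕ) (c : ℤ) : Subgroup (Equiv.Perm ℤ) where
  carrier := {g | ∀ x, (g x - c) / n = (x - c) / n}
  mul_mem' hg hh x := (hg _).trans (hh x)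
  one_mem' _ := rfl
  inv_mem' {g} hg x := by simpa using (hg (g⁻¹ x)).symm

theorem affineSwapPerm_mem_blockStabilizer {a b : ZMod n} {c : ℤ} (hc : (c : ZMod n) = a + 1)
    (hba : b ≠ a) : affineSwapPerm b ∈ blockStabilizer n c := by
  have hn : (0 : ℤ) < n := by have := (Fact.out : 1 < n); omega
  have hstep : ∀ y : ℤ, (y : ZMod n) = b → (y - c + 1) / n = (y - c) / n := fun y hy =>
    Int.add_one_ediv_of_not_dvd hn fun hdvd => hba <| by
      rw [← ZMod.intCast_zmod_eq_zero_iff_dvd] at hdvd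
      push_cast [hy, hc] at hdvd
      linear_combination hdvd
  intro x
  rw [affineSwapPerm_apply]
  by_cases hb : (x : ZMod n) = b
  · rw [affineSwap_of_eq hb, add_sub_right_comm, hstep x hb]
  by_cases hb1 : (x : ZMod n) = b + 1
  · rw [affineSwap_of_eq_add_one hb1, ← hstep (x - 1) (by push_cast [hb1]; ring)]
    ring_nf
  rw [affineSwap_of_ne hb hb1]

theorem affineSwapPerm_notMem_blockStabilizer {a : ZMod n} {c : ℤ} (hc : (c : ZMod n) = a + 1) :
    affineSwapPerm a ∉ blockStabilizer n c := by
  have hn : (0 : ℤ) < n := by have := (Fact.out : 1 < n); omega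
  intro h
  have := h (c - 1)
  rw [affineSwapPerm_apply, affineSwap_of_eq (by push_cast [hc]; ring), sub_add_cancel, sub_self,
    sub_sub_cancel_left, Int.neg_one_ediv, Int.sign_eq_one_of_pos hn, Int.zero_ediv] at this
  omega

end AffineSwap

open AffineSwap

theorem affCM_eq_two {k : ℕ} (hk : 2 ≤ k) {a b : Fin (k + 1)} (hab : a ≠ b)
    (hab' : a ≠ b + 1) (hba : b ≠ a + 1) : affCM k hk a b = 2 := by
  change (if a = b then 1 else if a = b + 1 ∨ b = a + 1 then 3 else 2) = 2
  rw [if_neg hab, if_neg (not_or.2 ⟨hab', hba⟩)]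

section AffineRepresentation

variable {k : ℕ} (hk : 2 ≤ k) [Fact (1 < k + 1)]

theorem isLiftable_affineSwapPerm :
    (affCM k hk).IsLiftable fun i => affineSwapPerm (ZMod.finEquiv (k + 1) i) := by
  set e := ZMod.finEquiv (k + 1)
  have he : ∀ a b, e a = e b + 1 ↔ a = b + 1 := fun a b => by
    rw [← map_one e, ← map_add, e.injective.eq_iff]
  have h2 : (2 : ZMod (k + 1)) ≠ 0 := fun h => by
    have := Nat.le_of_dvd two_pos ((ZMod.natCast_eq_zero_iff 2 (k + 1)).1 (by exact_mod_cast h))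
    omega
  intro i j
  change (affineSwapPerm (e i) * affineSwapPerm (e j)) ^
    (if i = j then 1 else if i = j + 1 ∨ j = i + 1 then 3 else 2) = 1
  split_ifs with hij hadj
  · rw [hij, pow_one, affineSwapPerm_mul_self]
  · rcases hadj with hadj | hadj
    · rw [(he i j).2 hadj]
      exact mul_pow_three_eq_one_of_braid (affineSwapPerm_inv _) (affineSwapPerm_inv _)
        (affineSwapPerm_braid h2 (e j)).symm
    · rw [(he j i).2 hadj]
      exact mul_pow_three_eq_one_of_braid (affineSwapPerm_inv _) (affineSwapPerm_inv _)
        (affineSwapPerm_braid h2 (e i))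
  · rw [not_or] at hadj
    have hcomm := affineSwapPerm_commute (e.injective.ne hij) (mt (he i j).1 hadj.1)
      (mt (he j i).1 hadj.2)
    rw [hcomm.mul_pow, pow_two, pow_two, affineSwapPerm_mul_self, affineSwapPerm_mul_self, one_mul]

variable {W : Type*} [Group W] (cs : CoxeterSystem (affCM k hk) W)

def affineRep : W →* Equiv.Perm ℤ := cs.lift ⟨_, isLiftable_affineSwapPerm hk⟩

theorem affineRep_simple (i : Fin (k + 1)) :
    affineRep hk cs (cs.simple i) = affineSwapPerm (ZMod.finEquiv (k + 1) i) :=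
  cs.lift_apply_simple _ i

theorem affineRep_wordProd_mem_blockStabilizer {ω : List (Fin (k + 1))} {a : Fin (k + 1)}
    (ha : a ∉ ω) {c : ℤ} (hc : (c : ZMod (k + 1)) = ZMod.finEquiv (k + 1) a + 1) :
    affineRep hk cs (cs.wordProd ω) ∈ blockStabilizer (k + 1) c := by
  rw [CoxeterSystem.wordProd, map_list_prod, List.map_map]
  refine Subgroup.list_prod_mem _ fun g hg => ?_
  obtain ⟨b, hb, rfl⟩ := List.mem_map.1 hg
  rw [Function.comp_apply, affineRep_simple]
  exact affineSwapPerm_mem_blockStabilizer hc ((ZMod.finEquiv (k + 1)).injective.ne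
    fun hba => ha (hba ▸ hb))

theorem mem_of_wordProd_eq_of_nodup {l ω : List (Fin (k + 1))} (hl : l.Nodup)
    (heq : cs.wordProd ω = cs.wordProd l) {a : Fin (k + 1)} (ha : a ∈ l) : a ∈ ω := by
  by_contra haω
  obtain ⟨c, hc⟩ := ZMod.intCast_surjective (ZMod.finEquiv (k + 1) a + 1)
  obtain ⟨l₁, l₂, rfl⟩ := List.append_of_mem ha
  have ha₁₂ : a ∉ l₁ ++ l₂ := (List.nodup_cons.1 (List.perm_middle.nodup_iff.1 hl)).1
  have hmem : ∀ ω' : List (Fin (k + 1)), a ∉ ω' →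
      affineRep hk cs (cs.wordProd ω') ∈ blockStabilizer (k + 1) c :=
    fun _ ha' => affineRep_wordProd_mem_blockStabilizer hk cs ha' hc
  have hω := hmem ω haω
  rw [heq, cs.wordProd_append, cs.wordProd_cons, map_mul, map_mul, affineRep_simple,
    Subgroup.mul_mem_cancel_left _ (hmem l₁ fun ha₁ => ha₁₂ (List.mem_append_left _ ha₁)),
    Subgroup.mul_mem_cancel_right _ (hmem l₂ fun ha₂ => ha₁₂ (List.mem_append_right _ ha₂))]
    at hω
  exact affineSwapPerm_notMem_blockStabilizer hc hω

theorem isReduced_of_nodup {l : List (Fin (k + 1))} (hl : l.Nodup) : cs.IsReduced l := by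
  obtain ⟨ω, hω, heq⟩ := cs.exists_isReduced (cs.wordProd l)
  refine le_antisymm (cs.length_wordProd_le l) ?_
  calc l.length = l.toFinset.card := (List.toFinset_card_of_nodup hl).symm
    _ ≤ ω.toFinset.card := Finset.card_le_card fun a ha => List.mem_toFinset.2
        (mem_of_wordProd_eq_of_nodup hk cs hl heq.symm (List.mem_toFinset.1 ha))
    _ ≤ ω.length := ω.toFinset_card_le
    _ = cs.length (cs.wordProd l) := by rw [heq, hω.eq]

end AffineRepresentation

theorem wordProd_eq_of_nodup_pairwise_ne_add_one {k : ℕ} (hk : 2 ≤ k) {W : Type*} [Group W]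
    (cs : CoxeterSystem (affCM k hk) W) {l l' : List (Fin (k + 1))} (hl : l.Nodup)
    (hl' : l'.Nodup) (hp : l.Pairwise fun a b => b ≠ a + 1)
    (hp' : l'.Pairwise fun a b => b ≠ a + 1) (hmem : ∀ i, i ∈ l ↔ i ∈ l') :
    cs.wordProd l = cs.wordProd l' := by
  refine List.Perm.prod_map_eq_of_pairwise_not (r := fun a b => a = b + 1) (fun a b hab hba => ?_)
    ((List.perm_ext_iff_of_nodup hl hl').2 hmem) hp hp'
  by_cases h : a = b
  · rw [h]
  · exact cs.commute_simple_of_eq_two (affCM_eq_two hk h hab hba)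

theorem stmt17_general (k : ℕ) (hk : 2 ≤ k)
    (cs : CoxeterSystem (affCM k hk) ((affCM k hk).Group))
    (D : Finset (Fin (k + 1))) (hD : D ≠ Finset.univ) :
    (∃! w : (affCM k hk).Group, IsCyclicallyDecreasingOn k hk cs D w) ∧
    (∀ w : (affCM k hk).Group,
      IsCyclicallyDecreasingOn k hk cs D w → cs.length w = D.card) := by
  have : Fact (1 < k + 1) := ⟨by omega⟩
  have hsucc := Fin.add_one_ne_self (k := k) (by omega)
  obtain ⟨c, hc⟩ : ∃ c, c ∉ D := by
    by_contra! h
    exact hD (Finset.eq_univ_iff_forall.2 h)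
  obtain ⟨l₀, hnd₀, hp₀, hmem₀⟩ := Fin.exists_nodup_pairwise_ne_add_one D hc
  refine ⟨⟨cs.wordProd l₀, ⟨l₀, rfl, isReduced_of_nodup hk cs hnd₀, hnd₀,
    (hnd₀.pairwise_ne_iff_idxOf_lt hsucc).1 hp₀, hmem₀⟩, ?_⟩, ?_⟩
  · rintro w ⟨l, rfl, -, hnd, hidx, hmem⟩
    exact wordProd_eq_of_nodup_pairwise_ne_add_one hk cs hnd hnd₀
      ((hnd.pairwise_ne_iff_idxOf_lt hsucc).2 hidx) hp₀ fun i => (hmem i).trans (hmem₀ i).symm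
  · rintro w ⟨l, rfl, hred, hnd, -, hmem⟩
    rw [hred.eq, ← List.toFinset_card_of_nodup hnd]
    congr 1
    ext i
    rw [List.mem_toFinset, hmem]

theorem stmt17 (k : ℕ) (hk : 2 ≤ k)
    (cs : CoxeterSystem (affCM k hk) ((affCM k hk).Group))
    (hcs : cs = (affCM k hk).toCoxeterSystem)
    (D : Finset (Fin (k + 1))) (hD : D ≠ Finset.univ) :
    (∃! w : (affCM k hk).Group, IsCyclicallyDecreasingOn k hk cs D w) ∧
    (∀ w : (affCM k hk).Group,
      IsCyclicallyDecreasingOn k hk cs D w → cs.length w = D.card) :=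
  stmt17_general k hk cs D hD
end
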